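/- Let n ≥ 1 and let Y : ℝ × ℝⁿ → ℝⁿ be twice continuously differentiable with det( I + ∇Y(t,y) ) = 1 for all (t,y) ∈ ℝ × ℝⁿ, where (∇Y(t,y))_{ij} = ∂_j Y_i(t,y) is the spatial Jacobian. Set f := Y(0,·) and g := ∂_t Y(0,·). Then for every y ∈ ℝⁿ the matrix I + ∇f(y) is invertible and tr( (I + ∇f(y))^{−1} · ∇g(y) ) = 0, where (∇f)_{ij} = ∂_j f_i and (∇g)_{ij} = ∂_j g_i. -/

import Mathlib

/-- Time derivative `∂_t u` of a function `u : ℝ × ℝⁿ → ℝ`. -/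
noncomputable def pt {n : ℕ} (u : ℝ × (Fin n → ℝ) → ℝ) (q : ℝ × (Fin n → ℝ)) : ℝ :=
  fderiv ℝ u q (1, 0)

/-- Spatial partial derivative `∂_j u` of a function `u : ℝ × ℝⁿ → ℝ`. -/
noncomputable def ps {n : ℕ} (j : Fin n) (u : ℝ × (Fin n → ℝ) → ℝ) (q : ℝ × (Fin n → ℝ)) : ℝ :=
  fderiv ℝ u q (0, Pi.single j 1)

/-!
Differentiate `det (I + ∇Y(t, y)) = 1` in `t` at `t = 0`. Jacobi's formula gives
`tr (adj (I + ∇f(y)) · ∂_t ∇Y(0, y)) = 0`; the adjugate is the inverse because the determinant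
is `1`, and `∂_t ∇Y = ∇ ∂_t Y` by symmetry of second derivatives, which at `t = 0` is `∇g`.
-/

open Matrix

namespace Matrix

variable {𝕜 ι : Type*} [NontriviallyNormedField 𝕜] [Fintype ι] [DecidableEq ι]

noncomputable def detRowContinuousMultilinear :
    ContinuousMultilinearMap 𝕜 (fun _ : ι => ι → 𝕜) 𝕜 where
  toMultilinearMap := (detRowAlternating : (ι → 𝕜) [⋀^ι]→ₗ[𝕜] 𝕜).toMultilinearMap
  cont := continuous_id.matrix_det

theorem det_updateRow_eq_sum_mul_adjugate {R : Type*} [CommRing R] (A : Matrix ι ι R) (i : ι)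
    (b : ι → R) : (A.updateRow i b).det = ∑ j, b j * A.adjugate j i := by
  rw [det_eq_sum_mul_adjugate_row _ i]
  simp only [updateRow_self, adjugate_apply, updateRow_idem]

theorem _root_.HasDerivAt.matrix_det {A : 𝕜 → ι → ι → 𝕜} {B : ι → ι → 𝕜} {t : 𝕜}
    (h : HasDerivAt A B t) :
    HasDerivAt (fun s => (of (A s)).det) ((of (A t)).adjugate * of B).trace t := by
  refine ((detRowContinuousMultilinear.hasFDerivAt (A t)).comp_hasDerivAt t h).congr_deriv ?_
  rw [ContinuousMultilinearMap.linearDeriv_apply]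
  calc ∑ i, detRowContinuousMultilinear (Function.update (A t) i (B i))
      = ∑ i, ∑ j, B i j * (of (A t)).adjugate j i :=
        Finset.sum_congr rfl fun i _ => det_updateRow_eq_sum_mul_adjugate (of (A t)) i (B i)
    _ = ((of (A t)).adjugate * of B).trace := by
        rw [Finset.sum_comm]
        simp only [trace, diag, mul_apply, of_apply, mul_comm]

theorem trace_adjugate_mul_eq_zero_of_det_const {A : 𝕜 → ι → ι → 𝕜} {B : ι → ι → 𝕜} {t c : 𝕜}
    (h : HasDerivAt A B t) (hdet : ∀ s, (of (A s)).det = c) :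
    ((of (A t)).adjugate * of B).trace = 0 :=
  h.matrix_det.unique (by simpa only [hdet] using hasDerivAt_const t c)

end Matrix

theorem ContDiff.hasDerivAt_fderiv_comp_apply {𝕜 E F : Type*} [RCLike 𝕜]
    [NormedAddCommGroup E] [NormedSpace 𝕜 E] [NormedAddCommGroup F] [NormedSpace 𝕜 F]
    {u : E → F} (hu : ContDiff 𝕜 2 u) {γ : 𝕜 → E} {v : E} {t : 𝕜} (hγ : HasDerivAt γ v t)
    (w : E) :
    HasDerivAt (fun s => fderiv 𝕜 u (γ s) w) (fderiv 𝕜 (fun q => fderiv 𝕜 u q v) (γ t) w) t := by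
  have hDu : Differentiable 𝕜 (fderiv 𝕜 u) := (hu.fderiv_right le_rfl).differentiable one_ne_zero
  have hsymm := hu.contDiffAt.isSymmSndFDerivAt (x := γ t) (by simp)
  refine (((hDu (γ t)).hasFDerivAt.clm_apply (hasFDerivAt_const w (γ t))).comp_hasDerivAt t
    hγ).congr_deriv ?_
  rw [fderiv_clm_apply (hDu _) (differentiableAt_const v)]
  simp [hsymm v w]

theorem initial_data_compatibility_general (n : ℕ)
    (Y : ℝ × (Fin n → ℝ) → Fin n → ℝ) (hY : ContDiff ℝ 2 Y)
    (hdet : ∀ q : ℝ × (Fin n → ℝ),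
      ((1 : Matrix (Fin n) (Fin n) ℝ) +
        Matrix.of fun i j => ps j (fun q' => Y q' i) q).det = 1) :
    ∀ y : Fin n → ℝ,
      IsUnit ((1 : Matrix (Fin n) (Fin n) ℝ) +
        Matrix.of fun i j => ps j (fun q' => Y q' i) (0, y)) ∧
      ((((1 : Matrix (Fin n) (Fin n) ℝ) +
          Matrix.of fun i j => ps j (fun q' => Y q' i) (0, y))⁻¹ *
        Matrix.of fun i j => ps j (fun q' => pt (fun q'' => Y q'' i) q') (0, y)).trace = 0) := by
  intro y
  have hline : HasDerivAt (fun t : ℝ => (t, y)) ((1 : ℝ), (0 : Fin n → ℝ)) 0 :=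
    (hasDerivAt_id 0).prodMk (hasDerivAt_const 0 y)
  have hJacobian : HasDerivAt (fun t : ℝ => ((1 : Matrix (Fin n) (Fin n) ℝ) +
      Matrix.of fun i j => ps j (fun q' => Y q' i) (t, y) : Fin n → Fin n → ℝ))
      (fun i j => ps j (fun q' => pt (fun q'' => Y q'' i) q') (0, y)) 0 := by
    refine hasDerivAt_pi.2 fun i => hasDerivAt_pi.2 fun j => ?_
    exact ((contDiff_pi.1 hY i).hasDerivAt_fderiv_comp_apply hline _).const_add _
  have hdet0 := hdet (0, y)
  refine ⟨(isUnit_iff_isUnit_det _).2 (hdet0 ▸ isUnit_one), ?_⟩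
  rw [inv_def, hdet0, Ring.inverse_one, one_smul]
  exact (trace_adjugate_mul_eq_zero_of_det_const hJacobian fun t => hdet (t, y) :)

/-- Compatibility condition for the initial data: if `Y` is `C²` with `det(I + ∇Y) ≡ 1`
(spatial Jacobian), and `f = Y(0,·)`, `g = ∂_t Y(0,·)`, then `I + ∇f(y)` is invertible and
`tr((I + ∇f(y))⁻¹ · ∇g(y)) = 0` for every `y`. -/
theorem initial_data_compatibility (n : ℕ) (hn : 1 ≤ n)
    (Y : ℝ × (Fin n → ℝ) → Fin n → ℝ) (hY : ContDiff ℝ 2 Y)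
    (hdet : ∀ q : ℝ × (Fin n → ℝ),
      ((1 : Matrix (Fin n) (Fin n) ℝ) +
        Matrix.of fun i j => ps j (fun q' => Y q' i) q).det = 1) :
    ∀ y : Fin n → ℝ,
      IsUnit ((1 : Matrix (Fin n) (Fin n) ℝ) +
        Matrix.of fun i j => ps j (fun q' => Y q' i) (0, y)) ∧
      ((((1 : Matrix (Fin n) (Fin n) ℝ) +
          Matrix.of fun i j => ps j (fun q' => Y q' i) (0, y))⁻¹ *
        Matrix.of fun i j => ps j (fun q' => pt (fun q'' => Y q'' i) q') (0, y)).trace = 0) :=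
  initial_data_compatibility_general n Y hY hdet
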